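/- arXiv:1011.2134 — 2 statements merged into one kernel-verified Lean document; each statement's English description precedes it below -/
import Mathlib

section
/- Let q be an odd prime power with -1 a square in F_q. The number of points [x_1:x_2:x_3:y_1:y_2:y_3] in P^5(F_q) satisfying x_1²+x_2²+x_3² - y_1²-y_2²-y_3² = 0 and x_1²+x_2²+x_3² ≠ 0 equals q²(1 + q²). -/
/-!
Every line spanned by a solution consists of `q - 1` nonzero solutions, so it suffices to count
the pairs `(x, y) ∈ F³ × F³` with `Q x = Q y ≠ 0`, where `Q` is the sum of three squares.
Since `-1 = i²`, the form `a² + b² = (a + i b)(a - i b)` is a hyperbolic plane, and this gives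
`#{Q = t} = q² + q χ(t)` for the quadratic character `χ`. Summing `(q² + q χ(t))²` over `t ≠ 0`,
with `χ(t)² = 1` and `∑ χ = 0`, yields `(q - 1) q² (1 + q²)`.
-/

open Finset Module Projectivization
open scoped LinearAlgebra.Projectivization

section Lines

variable {K V : Type*} [Field K] [AddCommGroup V] [Module K V] {P : V → Prop}

theorem Projectivization.forall_mem_submodule_iff_rep
    (hP : ∀ (c : K) (v : V), c ≠ 0 → P v → P (c • v)) (p : ℙ K V) :
    (∀ x ∈ p.submodule, x ≠ 0 → P x) ↔ P p.rep := by
  refine ⟨fun h => h _ ?_ p.rep_nonzero, fun h x hx hx0 => ?_⟩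
  · rw [submodule_eq]
    exact Submodule.mem_span_singleton_self _
  · rw [submodule_eq, Submodule.mem_span_singleton] at hx
    obtain ⟨c, rfl⟩ := hx
    exact hP c _ (left_ne_zero_of_smul hx0) h

theorem Projectivization.rep_mk_iff
    (hP : ∀ (c : K) (v : V), c ≠ 0 → P v → P (c • v)) {v : V} (hv : v ≠ 0) :
    P (mk K v hv).rep ↔ P v := by
  obtain ⟨c, hc⟩ := exists_smul_eq_mk_rep K v hv
  rw [← hc]
  refine ⟨fun h => ?_, fun h => hP c v c.ne_zero h⟩
  simpa [Units.smul_def, smul_smul] using hP (c⁻¹ : Kˣ) _ (c⁻¹).ne_zero h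

theorem card_lines_mul_card_sub_one (hP : ∀ (c : K) (v : V), c ≠ 0 → P v → P (c • v)) :
    Nat.card {ℓ : Submodule K V // finrank K ℓ = 1 ∧ ∀ x ∈ ℓ, x ≠ 0 → P x} * (Nat.card K - 1)
      = Nat.card {v : V // v ≠ 0 ∧ P v} := by
  have lines : {ℓ : Submodule K V // finrank K ℓ = 1 ∧ ∀ x ∈ ℓ, x ≠ 0 → P x}
      ≃ {p : ℙ K V // P p.rep} :=
    (Equiv.subtypeSubtypeEquivSubtypeInter _ _).symm.trans <|
      (Equiv.subtypeEquiv (equivSubmodule K V).symm fun ℓ => by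
        rw [← forall_mem_submodule_iff_rep hP, ← submodule_mk'' ℓ.1 ℓ.2]; rfl)
  have vectors : {v : V // v ≠ 0 ∧ P v} ≃ {p : ℙ K V // P p.rep} × Kˣ :=
    (Equiv.subtypeSubtypeEquivSubtypeInter _ _).symm.trans <|
      (Equiv.subtypeEquiv (nonZeroEquivProjectivizationProdUnits K V) fun v =>
        (rep_mk_iff hP v.2).symm).trans Equiv.prodSubtypeFstEquivSubtypeProd
  rw [Nat.card_congr lines, Nat.card_congr vectors, Nat.card_prod, Nat.card_units]

end Lines

theorem Nat.card_pairs_eq_sum_sq_card_fiber {X Y : Type*} [Finite X] [Fintype Y] [DecidableEq Y]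
    (f : X → Y) (y₀ : Y) :
    Nat.card {p : X × X // f p.1 = f p.2 ∧ f p.1 ≠ y₀}
      = ∑ t ∈ univ.erase y₀, Nat.card {x // f x = t} ^ 2 := by
  let e : {p : X × X // f p.1 = f p.2 ∧ f p.1 ≠ y₀}
      ≃ Σ t : {t // t ≠ y₀}, {x // f x = t} × {x // f x = t} :=
    { toFun p := ⟨⟨f p.1.1, p.2.2⟩, ⟨p.1.1, rfl⟩, ⟨p.1.2, p.2.1.symm⟩⟩
      invFun w := ⟨(w.2.1, w.2.2), w.2.1.2.trans w.2.2.2.symm, by rw [w.2.1.2]; exact w.1.2⟩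
      left_inv _ := rfl
      right_inv := by
        rintro ⟨⟨t, ht⟩, ⟨x, hx⟩, y⟩
        dsimp only at hx
        subst hx
        rfl }
  rw [Nat.card_congr e, Nat.card_sigma]
  simp only [Nat.card_prod, ← sq]
  exact (Finset.sum_subtype _ (by simp) (fun t => Nat.card {x // f x = t} ^ 2)).symm

section FiniteField

variable {F : Type*} [Field F]

theorem card_sq_add_sq_eq_card_mul_eq {i : F} (hi : i ^ 2 = -1) (h2 : (2 : F) ≠ 0) (u : F) :
    Nat.card {p : F × F // p.1 ^ 2 + p.2 ^ 2 = u} = Nat.card {p : F × F // p.1 * p.2 = u} :=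
  Nat.card_congr <| Equiv.subtypeEquiv
    { toFun p := (p.1 + i * p.2, p.1 - i * p.2)
      invFun p := ((p.1 + p.2) / 2, -i * (p.1 - p.2) / 2)
      left_inv p := by
        ext
        · field_simp; ring
        · field_simp; linear_combination (-2 * p.2) * hi
      right_inv p := by
        ext
        · field_simp; linear_combination (p.2 - p.1) * hi
        · field_simp; linear_combination (p.1 - p.2) * hi }
    fun p => by
      have hyperbolic : (p.1 + i * p.2) * (p.1 - i * p.2) = p.1 ^ 2 + p.2 ^ 2 := by
        linear_combination (-p.2 ^ 2) * hi
      simp only [Equiv.coe_fn_mk, hyperbolic]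

variable [Fintype F] [DecidableEq F]

theorem card_prod_mul_eq (u : F) :
    (Nat.card {p : F × F // p.1 * p.2 = u} : ℤ)
      = Fintype.card F - 1 + if u = 0 then (Fintype.card F : ℤ) else 0 := by
  have fiber (a : F) : (Nat.card {b // a * b = u} : ℤ)
      = if a = 0 then (if u = 0 then (Fintype.card F : ℤ) else 0) else 1 := by
    split_ifs with ha hu
    · simp [ha, hu, Nat.card_eq_fintype_card]
    · simp [ha, Ne.symm hu]
    · simp [← eq_inv_mul_iff_mul_eq₀ ha]
  rw [Nat.card_congr (Equiv.subtypeProdEquivSigmaSubtype fun a b => a * b = u), Nat.card_sigma,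
    Nat.cast_sum, Fintype.sum_eq_add_sum_compl 0]
  simp only [fiber]
  rw [if_true, sum_ite_of_false (by simp), sum_const, card_compl, card_singleton,
    nsmul_one, Nat.cast_pred Fintype.card_pos]
  ring

theorem card_sum_three_sq_eq (hF : ringChar F ≠ 2) {i : F} (hi : i ^ 2 = -1) (t : F) :
    (Nat.card {v : F × F × F // v.1 ^ 2 + v.2.1 ^ 2 + v.2.2 ^ 2 = t} : ℤ)
      = Fintype.card F ^ 2 + Fintype.card F * quadraticChar F t := by
  have e : {v : F × F × F // v.1 ^ 2 + v.2.1 ^ 2 + v.2.2 ^ 2 = t}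
      ≃ Σ a : F, {p : F × F // p.1 ^ 2 + p.2 ^ 2 = t - a ^ 2} :=
    (Equiv.subtypeEquivRight fun v => by rw [eq_sub_iff_add_eq', add_assoc]).trans
      (Equiv.subtypeProdEquivSigmaSubtype fun (a : F) (p : F × F) => p.1 ^ 2 + p.2 ^ 2 = t - a ^ 2)
  have h2 : (2 : F) ≠ 0 := Ring.two_ne_zero hF
  rw [Nat.card_congr e, Nat.card_sigma, Nat.cast_sum]
  simp only [card_sq_add_sq_eq_card_mul_eq hi h2, card_prod_mul_eq, sub_eq_zero, eq_comm (a := t)]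
  rw [sum_add_distrib, ← sum_filter, sum_const, sum_const, card_univ]
  have hsq : (((univ.filter fun c : F => c ^ 2 = t).card : ℤ)) = quadraticChar F t + 1 := by
    rw [← quadraticChar_card_sqrts hF t, Set.toFinset_ofPred]
  rw [nsmul_eq_mul, nsmul_eq_mul, hsq]
  ring

theorem sum_erase_zero_sq_add_mul_quadraticChar (hF : ringChar F ≠ 2) (a b : ℤ) :
    ∑ t ∈ univ.erase (0 : F), (a + b * quadraticChar F t) ^ 2
      = (Fintype.card F - 1) * (a ^ 2 + b ^ 2) := by
  have expand (t : F) (ht : t ∈ univ.erase 0) :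
      (a + b * quadraticChar F t) ^ 2 = a ^ 2 + b ^ 2 + 2 * a * b * quadraticChar F t := by
    linear_combination b ^ 2 * quadraticChar_sq_one (ne_of_mem_erase ht)
  rw [sum_congr rfl expand, sum_add_distrib, sum_const, ← mul_sum,
    sum_erase_eq_sub (mem_univ 0), quadraticChar_sum_zero hF, quadraticChar_zero,
    card_erase_of_mem (mem_univ 0), card_univ, nsmul_eq_mul, Nat.cast_pred Fintype.card_pos]
  ring

end FiniteField

@[simps]
def finSixEquivTriples {F : Type*} : (Fin 6 → F) ≃ (F × F × F) × (F × F × F) where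
  toFun x := ((x 0, x 1, x 2), (x 3, x 4, x 5))
  invFun p := ![p.1.1, p.1.2.1, p.1.2.2, p.2.1, p.2.2.1, p.2.2.2]
  left_inv x := by ext j; fin_cases j <;> rfl
  right_inv _ := rfl

/-- Let `q` be an odd prime power with `-1` a square in `F_q`.  The number of points
`[x₁ : x₂ : x₃ : y₁ : y₂ : y₃]` of `P^5(F_q)` (lines through the origin of `F_q^6`)
satisfying `x₁² + x₂² + x₃² - y₁² - y₂² - y₃² = 0` and `x₁² + x₂² + x₃² ≠ 0` equals
`q²(1 + q²)`. -/
theorem card_Gr24_points (F : Type) [Field F] [Fintype F]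
    (hodd : Odd (Fintype.card F)) (hi : ∃ i : F, i ^ 2 = -1) :
    Nat.card {ℓ : Submodule F (Fin 6 → F) //
        Module.finrank F ℓ = 1 ∧ ∀ x ∈ ℓ, x ≠ 0 →
          ((x 0) ^ 2 + (x 1) ^ 2 + (x 2) ^ 2 - ((x 3) ^ 2 + (x 4) ^ 2 + (x 5) ^ 2) = 0 ∧
            (x 0) ^ 2 + (x 1) ^ 2 + (x 2) ^ 2 ≠ 0)}
      = Fintype.card F ^ 2 * (1 + Fintype.card F ^ 2) := by
  classical
  obtain ⟨i, hi⟩ := hi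
  have hF : ringChar F ≠ 2 := fun h => by
    have := FiniteField.even_card_of_char_two h
    rw [Nat.odd_iff] at hodd
    omega
  refine Nat.eq_of_mul_eq_mul_right (Nat.sub_pos_of_lt (Fintype.one_lt_card (α := F))) ?_
  rw [← Nat.card_eq_fintype_card, card_lines_mul_card_sub_one ?scaling,
    Nat.card_congr (Equiv.subtypeEquiv finSixEquivTriples fun x => ?pairs),
    Nat.card_pairs_eq_sum_sq_card_fiber (fun v : F × F × F => v.1 ^ 2 + v.2.1 ^ 2 + v.2.2 ^ 2) 0]
  case pairs =>
    simp only [finSixEquivTriples_apply, sub_eq_zero]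
    exact ⟨And.right, fun h => ⟨fun hx => h.2 (by simp [hx]), h⟩⟩
  case scaling =>
    intro c x hc hx
    simp only [Pi.smul_apply, smul_eq_mul, mul_pow, ← mul_add, ← mul_sub]
    exact ⟨by rw [hx.1, mul_zero], mul_ne_zero (pow_ne_zero 2 hc) hx.2⟩
  zify [Nat.one_le_iff_ne_zero.mpr Nat.card_pos.ne']
  simp only [card_sum_three_sq_eq hF hi]
  rw [sum_erase_zero_sq_add_mul_quadraticChar hF, Nat.card_eq_fintype_card]
  ring
end

section
/- Let q be an odd prime power with -1 a square in F_q. Define, for (k,n) = (2j,2m), (2j,2m+1), or (2j+1,2m+1), the number N(k,n) of F_q points of the split form of the real Grassmannian (i.e. |Gr(k,n)_{F_q}| as in the paper). Then N(k,n) = q^r · [m choose j]_{q²} with r = k(n-k) - 2j(m-j); in particular, for (k,n)=(1,3): the number of points of {ℓ ∈ P²(F_q) : x²+y²+z² ≠ 0 on ℓ∖{0}} equals q². -/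
/-!
A nonzero vector of an anisotropic line is anisotropic and spans the line, so the anisotropic
lines partition the anisotropic vectors into classes of size `q - 1`. With `i² = -1` and `2`
invertible, `x² + y² + z² = (x + i y)(x - i y) + z²`, and the cone `u v + w² = 0` has `q²` points:
they are parametrised by `(u, w)` off the plane `u = 0` and by `v` on it. Hence there are
`(q³ - q²) / (q - 1) = q²` anisotropic lines.
-/

open Module

section AnisotropicLines

variable {F V : Type*} [Field F] [AddCommGroup V] [Module F V]

theorem Submodule.span_singleton_eq_of_finrank_eq_one {ℓ : Submodule F V} (hℓ : finrank F ℓ = 1)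
    {x : V} (hx : x ∈ ℓ) (hx0 : x ≠ 0) : F ∙ x = ℓ :=
  have : FiniteDimensional F ℓ := Module.finite_of_finrank_eq_succ hℓ
  Submodule.eq_of_le_of_finrank_eq ((Submodule.span_singleton_le_iff_mem x ℓ).mpr hx)
    (by rw [finrank_span_singleton hx0, hℓ])

theorem Submodule.natCard_subtype_ne_zero_of_finrank_eq_one [Finite F] {ℓ : Submodule F V}
    (hℓ : finrank F ℓ = 1) : Nat.card {x : ℓ // x ≠ 0} = Nat.card F - 1 := by
  have : FiniteDimensional F ℓ := Module.finite_of_finrank_eq_succ hℓ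
  let e : ℓ ≃ₗ[F] F := LinearEquiv.ofFinrankEq ℓ F (by rw [hℓ, finrank_self])
  rw [← Nat.card_units, Nat.card_congr (unitsEquivNeZero (G₀ := F))]
  exact Nat.card_congr (e.toEquiv.subtypeEquiv fun _ => e.map_ne_zero_iff.symm)

variable (Q : V → F)

def anisotropicLines : Set (Submodule F V) :=
  {ℓ | finrank F ℓ = 1 ∧ ∀ x ∈ ℓ, Q x = 0 → x = 0}

variable (hQ : ∀ (c : F) (x : V), Q (c • x) = c ^ 2 * Q x)
include hQ

theorem ne_zero_of_apply_ne_zero {v : V} (hv : Q v ≠ 0) : v ≠ 0 := by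
  rintro rfl
  exact hv (by simpa using hQ 0 0)

theorem span_singleton_mem_anisotropicLines {v : V} (hv : Q v ≠ 0) :
    F ∙ v ∈ anisotropicLines Q := by
  refine ⟨finrank_span_singleton (ne_zero_of_apply_ne_zero Q hQ hv), fun x hx hQx => ?_⟩
  obtain ⟨c, rfl⟩ := Submodule.mem_span_singleton.mp hx
  rw [hQ, mul_eq_zero, pow_eq_zero_iff two_ne_zero] at hQx
  rcases hQx with rfl | hQv
  · exact zero_smul F v
  · exact absurd hQv hv

theorem natCard_anisotropicLines_mul [Finite F] [Finite V] :
    Nat.card (anisotropicLines Q) * (Nat.card F - 1) = Nat.card {v : V // Q v ≠ 0} := by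
  have : Fintype (anisotropicLines Q) := Fintype.ofFinite _
  let line (v : {v : V // Q v ≠ 0}) : anisotropicLines Q :=
    ⟨F ∙ v.1, span_singleton_mem_anisotropicLines Q hQ v.2⟩
  have fiber (ℓ : anisotropicLines Q) : {v // line v = ℓ} ≃ {x : ℓ.1 // x ≠ 0} :=
    { toFun v := ⟨⟨v.1.1, (congrArg Subtype.val v.2).le (Submodule.mem_span_singleton_self _)⟩,
        fun h => ne_zero_of_apply_ne_zero Q hQ v.1.2 (congrArg Subtype.val h)⟩
      invFun x := ⟨⟨x.1.1, fun h => x.2 (Subtype.ext (ℓ.2.2 _ x.1.2 h))⟩,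
        Subtype.ext (Submodule.span_singleton_eq_of_finrank_eq_one ℓ.2.1 x.1.2
          (fun h => x.2 (Subtype.ext h)))⟩
      left_inv _ := rfl
      right_inv _ := rfl }
  calc Nat.card (anisotropicLines Q) * (Nat.card F - 1)
      = ∑ ℓ : anisotropicLines Q, Nat.card {x : ℓ.1 // x ≠ 0} := by
        rw [Finset.sum_congr rfl fun ℓ _ =>
            Submodule.natCard_subtype_ne_zero_of_finrank_eq_one ℓ.2.1, Finset.sum_const,
          Finset.card_univ, smul_eq_mul, Nat.card_eq_fintype_card]
    _ = Nat.card (Σ ℓ, {v // line v = ℓ}) := by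
        rw [Nat.card_sigma]; simp_rw [Nat.card_congr (fiber _)]
    _ = Nat.card {v : V // Q v ≠ 0} := Nat.card_congr (Equiv.sigmaFiberEquiv line)

end AnisotropicLines

theorem natCard_mul_add_sq_eq_zero (F : Type*) [Field F] :
    Nat.card {p : F × F × F // p.1 * p.2.1 + p.2.2 ^ 2 = 0} = Nat.card F ^ 2 := by
  classical
  refine (Nat.card_congr (?_ : F × F ≃ _)).symm.trans (by rw [Nat.card_prod, sq])
  exact
    { toFun := fun ⟨u, t⟩ => if hu : u = 0 then ⟨(0, t, 0), by simp⟩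
        else ⟨(u, -t ^ 2 / u, t), by field_simp; ring⟩
      invFun := fun p => (p.1.1, if p.1.1 = 0 then p.1.2.1 else p.1.2.2)
      left_inv := fun ⟨u, t⟩ => by by_cases hu : u = 0 <;> simp [hu]
      right_inv := by
        rintro ⟨⟨u, v, w⟩, hp⟩
        by_cases hu : u = 0
        · subst hu
          obtain rfl : w = 0 := by simpa using hp
          simp
        · have hv : v = -w ^ 2 / u := by rw [eq_div_iff hu]; linear_combination hp
          simp [hu, hv] }

theorem natCard_sum_three_sq_eq_zero {F : Type*} [Field F] (h2 : (2 : F) ≠ 0) {i : F}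
    (hi : i ^ 2 = -1) :
    Nat.card {x : Fin 3 → F // x 0 ^ 2 + x 1 ^ 2 + x 2 ^ 2 = 0} = Nat.card F ^ 2 := by
  have hi0 : i ≠ 0 := by rintro rfl; simp at hi
  let e : (Fin 3 → F) ≃ F × F × F :=
    { toFun x := (x 0 + i * x 1, x 0 - i * x 1, x 2)
      invFun p := ![(p.1 + p.2.1) / 2, (p.1 - p.2.1) / (2 * i), p.2.2]
      left_inv x := by
        funext j
        fin_cases j <;> simp <;> field_simp <;> ring
      right_inv p := by
        ext <;> simp <;> field_simp <;> ring }
  rw [← natCard_mul_add_sq_eq_zero F]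
  exact Nat.card_congr (e.subtypeEquiv fun x => by
    show _ ↔ (x 0 + i * x 1) * (x 0 - i * x 1) + x 2 ^ 2 = 0
    rw [iff_iff_eq]
    congr 1
    linear_combination x 1 ^ 2 * hi)

theorem natCard_sum_three_sq_ne_zero {F : Type*} [Field F] [Finite F] (h2 : (2 : F) ≠ 0) {i : F}
    (hi : i ^ 2 = -1) :
    Nat.card {x : Fin 3 → F // x 0 ^ 2 + x 1 ^ 2 + x 2 ^ 2 ≠ 0} =
      Nat.card F ^ 2 * (Nat.card F - 1) := by
  classical
  have := Fintype.ofFinite F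
  rw [Nat.card_eq_fintype_card, Fintype.card_subtype_compl, ← Nat.card_eq_fintype_card,
    ← Nat.card_eq_fintype_card, natCard_sum_three_sq_eq_zero h2 hi, Nat.card_fun, Nat.card_fin,
    Nat.mul_sub_one, ← pow_succ]

/-- Let `q` be an odd prime power with `-1` a square in `F_q`.  The number of `F_q`-points
of the split form of the real Grassmannian `Gr(1,3) = ℝP²`, namely the number of lines
`ℓ ∈ P²(F_q)` on which the quadratic form `x² + y² + z²` vanishes only at `0`,
equals `q²` (the case `(k, n) = (1, 3)`, `r = 2`, `[1 choose 0]_{q²} = 1` of the formula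
`|Gr(k,n)_{F_q}| = q^r [m choose j]_{q²}` with `r = k(n-k) - 2j(m-j)`). -/
theorem card_Gr13_points (F : Type) [Field F] [Fintype F]
    (hodd : Odd (Fintype.card F)) (hi : ∃ i : F, i ^ 2 = -1) :
    Nat.card {ℓ : Submodule F (Fin 3 → F) //
        Module.finrank F ℓ = 1 ∧
          ∀ x ∈ ℓ, (x 0) ^ 2 + (x 1) ^ 2 + (x 2) ^ 2 = 0 → x = 0}
      = Fintype.card F ^ 2 := by
  obtain ⟨i, hi⟩ := hi
  have h2 : (2 : F) ≠ 0 := Ring.two_ne_zero fun hchar => by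
    have := FiniteField.even_card_iff_char_two.mp hchar
    rw [Nat.odd_iff] at hodd
    omega
  have hcount := natCard_anisotropicLines_mul (fun x : Fin 3 → F => x 0 ^ 2 + x 1 ^ 2 + x 2 ^ 2)
    (fun c x => by simp only [Pi.smul_apply, smul_eq_mul]; ring)
  rw [natCard_sum_three_sq_ne_zero h2 hi] at hcount
  rw [← Nat.card_eq_fintype_card]
  exact Nat.eq_of_mul_eq_mul_right (Nat.sub_pos_of_lt Finite.one_lt_card) hcount
end
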